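/- arXiv:2008.00713 — 2 statements merged into one kernel-verified Lean document; each statement's English description precedes it below -/
import Mathlib

section
/- The encoding satisfies the sufficient (orthogonality) condition for quantum error correction: for any two single-qutrit errors σ_m^(j) and σ_n^(k) with σ_m, σ_n ∈ {I, X₁, X₂, Z₁, Z₂, X₁Z₁, X₁Z₂, X₂Z₁, X₂Z₂} and j, k ∈ Fin 7, and for any i ≠ i' in {0,1,2}, one has ⟨i_L| (σ_m^(j))† σ_n^(k) |i'_L⟩ = 0, where M^(j) denotes M applied at position j, † is the conjugate transpose, and ⟨·|·⟩ is the standard Hermitian inner product on V. -/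
open Complex Matrix

noncomputable section

/-- ω = exp(2πi/3), a primitive cube root of unity. -/
def ω : ℂ := Complex.exp (2 * (Real.pi : ℂ) * Complex.I / 3)

/-- The ternary cyclic shift matrix: X₁ e_j = e_{(j+1) mod 3}. -/
def X1 : Matrix (Fin 3) (Fin 3) ℂ := Matrix.of fun i j => if i = j + 1 then (1 : ℂ) else 0

/-- The ternary phase matrix Z₁ = diag(1, ω, ω²). -/
def Z1 : Matrix (Fin 3) (Fin 3) ℂ := Matrix.diagonal ![1, ω, ω ^ 2]

/-- X₂ = X₁·X₁. -/
def X2 : Matrix (Fin 3) (Fin 3) ℂ := X1 * X1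

/-- Z₂ = Z₁·Z₁. -/
def Z2 : Matrix (Fin 3) (Fin 3) ℂ := Z1 * Z1

/-- The 7-qutrit state space. -/
abbrev V : Type := (Fin 7 → Fin 3) → ℂ

/-- Standard basis vector of the 7-qutrit state space indexed by a ternary string. -/
def e (s : Fin 7 → Fin 3) : V := fun t => if t = s then 1 else 0

/-- Action on the 7-qutrit space of a tensor product M₀ ⊗ M₁ ⊗ … ⊗ M₆ of 3×3 matrices. -/
def act (M : Fin 7 → Matrix (Fin 3) (Fin 3) ℂ) (v : V) : V :=
  fun s => ∑ t : Fin 7 → Fin 3, (∏ j : Fin 7, M j (s j) (t j)) * v t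

/-- `applyAt M j` applies the single-qutrit operator `M` at position `j` (identity elsewhere). -/
def applyAt (M : Matrix (Fin 3) (Fin 3) ℂ) (j : Fin 7) : V → V :=
  act (fun k => if k = j then M else 1)

/-- The unnormalized logical codeword |0_L⟩. -/
def c0 : V :=
  e ![0,0,0,0,0,0,0] + e ![1,0,2,0,1,0,2] + e ![2,0,1,0,2,0,1]
    + e ![0,1,0,2,0,1,0] + e ![1,1,2,2,1,1,2] + e ![2,1,1,2,2,1,1]
    + e ![0,2,0,1,0,2,0] + e ![1,2,2,1,1,2,2] + e ![2,2,1,1,2,2,1]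

/-- The unnormalized logical codeword |1_L⟩. -/
def c1 : V :=
  e ![1,1,1,1,1,1,1] + e ![2,1,0,1,2,1,0] + e ![0,1,2,1,0,1,2]
    + e ![1,2,1,0,1,2,1] + e ![2,2,0,0,2,2,0] + e ![0,2,2,0,0,2,2]
    + e ![1,0,1,2,1,0,1] + e ![2,0,0,2,2,0,0] + e ![0,0,2,2,0,0,2]

/-- The unnormalized logical codeword |2_L⟩. -/
def c2 : V :=
  e ![2,2,2,2,2,2,2] + e ![0,2,1,2,0,2,1] + e ![1,2,0,2,1,2,0]
    + e ![2,0,2,1,2,0,2] + e ![0,0,1,1,0,0,1] + e ![1,0,0,1,1,0,0]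
    + e ![2,1,2,0,2,1,2] + e ![0,1,1,0,0,1,1] + e ![1,1,0,0,1,1,0]

/-- The three logical codewords. -/
def cw : Fin 3 → V := ![c0, c1, c2]

/-- Phase-error stabilizer S₁ = X₁⊗I⊗X₂⊗I⊗X₁⊗I⊗X₂. -/
def S1 : V → V := act ![X1, 1, X2, 1, X1, 1, X2]

/-- Phase-error stabilizer S₂ = I⊗X₁⊗I⊗X₂⊗I⊗X₁⊗I. -/
def S2 : V → V := act ![1, X1, 1, X2, 1, X1, 1]

/-- Bit-error stabilizer S₃ = Z₁⊗Z₂⊗Z₁⊗Z₂⊗I⊗I⊗I. -/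
def S3 : V → V := act ![Z1, Z2, Z1, Z2, 1, 1, 1]

/-- Bit-error stabilizer S₄ = I⊗I⊗I⊗Z₁⊗Z₂⊗Z₁⊗Z₂. -/
def S4 : V → V := act ![1, 1, 1, Z1, Z2, Z1, Z2]

/-- Bit-error stabilizer S₅ = I⊗Z₁⊗Z₂⊗Z₁⊗Z₂⊗I⊗I. -/
def S5 : V → V := act ![1, Z1, Z2, Z1, Z2, 1, 1]

/-- Bit-error stabilizer S₆ = I⊗I⊗Z₁⊗Z₂⊗Z₁⊗Z₂⊗I. -/
def S6 : V → V := act ![1, 1, Z1, Z2, Z1, Z2, 1]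

/-- The standard Hermitian inner product on the 7-qutrit state space. -/
def ip (u v : V) : ℂ := ∑ s : Fin 7 → Fin 3, (starRingEnd ℂ) (u s) * v s

/-!
The support of `|i_L⟩` is the coset `C + i·(1,…,1)` of the ternary linear code `C` spanned by
`g₁ = 1020102` and `g₂ = 0102010`. Every string of the cosets `C + 1` and `C + 2` has at least
three nonzero entries, so strings in the supports of different codewords differ in at least three
positions. A product of operators acting on the qutrits `j` and `k` leaves the other five
coordinates of a basis string unchanged, hence its matrix elements between two such strings vanish.
-/

lemma applyAt_sum {ι : Type*} (M : Matrix (Fin 3) (Fin 3) ℂ) (j : Fin 7) (S : Finset ι)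
    (v : ι → V) : applyAt M j (∑ x ∈ S, v x) = ∑ x ∈ S, applyAt M j (v x) := by
  funext t
  simp only [applyAt, act, Finset.sum_apply, Finset.mul_sum]
  exact Finset.sum_comm

lemma ip_sum_left {ι : Type*} (S : Finset ι) (u : ι → V) (w : V) :
    ip (∑ x ∈ S, u x) w = ∑ x ∈ S, ip (u x) w := by
  simp only [ip, Finset.sum_apply, map_sum (starRingEnd ℂ), Finset.sum_mul]
  exact Finset.sum_comm

lemma ip_sum_right {ι : Type*} (u : V) (S : Finset ι) (w : ι → V) :
    ip u (∑ x ∈ S, w x) = ∑ x ∈ S, ip u (w x) := by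
  simp only [ip, Finset.sum_apply, Finset.mul_sum]
  exact Finset.sum_comm

lemma ip_e_left (t : Fin 7 → Fin 3) (w : V) : ip (e t) w = w t := by
  simp [ip, e, apply_ite]

lemma applyAt_apply_eq_zero {M : Matrix (Fin 3) (Fin 3) ℂ} {j p : Fin 7} (hp : p ≠ j) {v : V}
    {t : Fin 7 → Fin 3} (hv : ∀ u, u p = t p → v u = 0) : applyAt M j v t = 0 := by
  unfold applyAt act
  refine Finset.sum_eq_zero fun u _ => ?_
  by_cases hu : u p = t p
  · rw [hv u hu, mul_zero]
  · refine mul_eq_zero_of_left (Finset.prod_eq_zero (Finset.mem_univ p) ?_) _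
    simp [hp, Matrix.one_apply_ne (Ne.symm hu)]

lemma ip_e_applyAt_applyAt_e_eq_zero {t s : Fin 7 → Fin 3} (h : 3 ≤ hammingDist t s)
    (A B : Matrix (Fin 3) (Fin 3) ℂ) (j k : Fin 7) :
    ip (e t) (applyAt A j (applyAt B k (e s))) = 0 := by
  obtain ⟨p, hp, hpj, hpk⟩ : ∃ p, t p ≠ s p ∧ p ≠ j ∧ p ≠ k := by
    simpa using Finset.exists_mem_notMem_of_card_lt_card
      (s := {j, k}) (t := {p | t p ≠ s p}) (Finset.card_le_two.trans_lt h)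
  rw [ip_e_left]
  refine applyAt_apply_eq_zero hpj fun u hu => applyAt_apply_eq_zero hpk fun u' hu' => ?_
  have : u' ≠ s := fun hu's => hp (by rw [← hu, ← hu', hu's])
  simp [e, this]

def g₁ : Fin 7 → Fin 3 := ![1, 0, 2, 0, 1, 0, 2]

def g₂ : Fin 7 → Fin 3 := ![0, 1, 0, 2, 0, 1, 0]

def codeString (i : Fin 3) (m : Fin 3 × Fin 3) : Fin 7 → Fin 3 :=
  fun p => i + m.1 * g₁ p + m.2 * g₂ p

lemma cw_eq_sum_e_codeString (i : Fin 3) : cw i = ∑ m, e (codeString i m) := by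
  rw [Fintype.sum_prod_type_right]
  fin_cases i <;>
  · simp only [cw, c0, c1, c2, Fin.sum_univ_three, ← add_assoc, Fin.zero_eta, Fin.mk_one,
      Fin.reduceFinMk, Matrix.cons_val]
    congr! 9 <;> decide

open Fin.CommRing in
lemma neg_codeString_add_codeString (i i' : Fin 3) (m m' : Fin 3 × Fin 3) :
    -codeString i m + codeString i' m' = codeString (-i + i') (-m + m') := by
  funext p
  simp only [codeString, Pi.add_apply, Pi.neg_apply, Prod.fst_add, Prod.snd_add, Prod.fst_neg,
    Prod.snd_neg]
  ring

lemma three_le_hammingNorm_codeString : ∀ i ≠ 0, ∀ m, 3 ≤ hammingNorm (codeString i m) := by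
  decide

lemma three_le_hammingDist_codeString {i i' : Fin 3} (h : i ≠ i') (m m' : Fin 3 × Fin 3) :
    3 ≤ hammingDist (codeString i m) (codeString i' m') := by
  rw [hammingDist_eq_hammingNorm, neg_codeString_add_codeString]
  exact three_le_hammingNorm_codeString _ (neg_add_eq_zero.not.mpr h) _

/-- Orthogonality condition for error correction: for any two single-qutrit errors
σ_m^(j), σ_n^(k) with σ_m, σ_n ∈ {I, X₁, X₂, Z₁, Z₂, X₁Z₁, X₁Z₂, X₂Z₁, X₂Z₂} and any
i ≠ i', one has ⟨i_L| (σ_m^(j))† σ_n^(k) |i'_L⟩ = 0. -/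
theorem orthogonality_condition :
    ∀ σm ∈ ({1, X1, X2, Z1, Z2, X1 * Z1, X1 * Z2, X2 * Z1, X2 * Z2} :
        Set (Matrix (Fin 3) (Fin 3) ℂ)),
      ∀ σn ∈ ({1, X1, X2, Z1, Z2, X1 * Z1, X1 * Z2, X2 * Z1, X2 * Z2} :
          Set (Matrix (Fin 3) (Fin 3) ℂ)),
        ∀ j k : Fin 7, ∀ i i' : Fin 3, i ≠ i' →
          ip (cw i) (applyAt σmᴴ j (applyAt σn k (cw i'))) = 0 := by
  intro σm _ σn _ j k i i' hii'
  rw [cw_eq_sum_e_codeString, cw_eq_sum_e_codeString, applyAt_sum, applyAt_sum, ip_sum_left]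
  refine Finset.sum_eq_zero fun m _ => ?_
  rw [ip_sum_right]
  exact Finset.sum_eq_zero fun m' _ =>
    ip_e_applyAt_applyAt_e_eq_zero (three_le_hammingDist_codeString hii' m m') _ _ _ _
end
end

section
/- Single Z₁ phase errors have the following syndromes: for each logical codeword |ψ⟩ ∈ {|0_L⟩, |1_L⟩, |2_L⟩}, (i) if j ∈ {0,4} then S₁(Z₁^(j)|ψ⟩) = ω²·Z₁^(j)|ψ⟩ and S₂(Z₁^(j)|ψ⟩) = Z₁^(j)|ψ⟩; (ii) if j ∈ {2,6} then S₁ gives eigenvalue ω and S₂ gives eigenvalue 1 on Z₁^(j)|ψ⟩; (iii) if j ∈ {1,5} then S₁ gives eigenvalue 1 and S₂ gives eigenvalue ω²; (iv) if j = 3 then S₁ gives eigenvalue 1 and S₂ gives eigenvalue ω. -/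
open Complex Matrix

noncomputable section

/-!
S₁ and S₂ are tensor products of cyclic shifts, `X^a` and `X^b` with exponent strings
`a = (1,0,2,0,1,0,2)` and `b = (0,1,0,2,0,1,0)`. Each codeword `|i_L⟩` is the uniform superposition
over the coset `i·𝟙 + ⟨a, b⟩` of ternary strings, so it is fixed by both. Since `X Z = ω⁻¹ Z X`,
moving `X^a` past `Z₁^(j)` costs the phase `ω^(-a_j)`; hence `Z₁^(j)|i_L⟩` is an eigenvector of S₁
with eigenvalue `ω^(-a_j)` and of S₂ with eigenvalue `ω^(-b_j)`.
-/

lemma omega_pow_three : ω ^ 3 = 1 := by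
  simpa [ω] using (Complex.isPrimitiveRoot_exp 3 three_ne_zero).pow_eq_one

lemma omega_pow_val_add (x y : Fin 3) : ω ^ ((x + y : Fin 3) : ℕ) = ω ^ (x : ℕ) * ω ^ (y : ℕ) := by
  rw [Fin.val_add, ← pow_eq_pow_mod _ omega_pow_three, pow_add]

def shift {G R : Type*} [Add G] [DecidableEq G] [Zero R] [One R] (k : G) : Matrix G G R :=
  of fun i m => if i = m + k then 1 else 0

lemma shift_mul_shift {G R : Type*} [AddCommGroup G] [Fintype G] [DecidableEq G]
    [NonAssocSemiring R] (a b : G) : (shift a * shift b : Matrix G G R) = shift (a + b) := by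
  ext i m
  simp [shift, Matrix.mul_apply, ← add_assoc, add_right_comm]

lemma shift_zero {G R : Type*} [AddZeroClass G] [DecidableEq G] [Zero R] [One R] :
    (shift 0 : Matrix G G R) = 1 := by
  ext i m
  simp [shift, Matrix.one_apply]

lemma X1_eq_shift : X1 = shift 1 := rfl

lemma X2_eq_shift : X2 = shift 2 := by
  rw [X2, X1_eq_shift, shift_mul_shift]
  rfl

lemma Z1_eq_diagonal : Z1 = diagonal fun m : Fin 3 => ω ^ (m : ℕ) := by
  rw [Z1]
  congr
  ext m
  fin_cases m <;> simp

lemma act_shift_apply (a : Fin 7 → Fin 3) (v : V) (s : Fin 7 → Fin 3) :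
    act (fun k => shift (a k)) v s = v (s - a) := by
  simp only [act, shift, of_apply, Finset.prod_boole]
  simp [← sub_eq_iff_eq_add, ← Pi.sub_apply, ← funext_iff]

lemma applyAt_diagonal_apply (d : Fin 3 → ℂ) (j : Fin 7) (v : V) (s : Fin 7 → Fin 3) :
    applyAt (diagonal d) j v s = d (s j) * v s := by
  have factor : ∀ (t : Fin 7 → Fin 3) (k : Fin 7),
      (if k = j then diagonal d else 1) (s k) (t k)
        = (if s k = t k then 1 else 0) * (if k = j then d (s k) else 1) := by
    intro t k
    by_cases hk : k = j <;> simp [hk, diagonal_apply, one_apply]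
  simp only [applyAt, act, factor, Finset.prod_mul_distrib, Finset.prod_boole,
    Finset.prod_ite_eq', Finset.mem_univ, if_true]
  simp [← funext_iff]

lemma act_shift_applyAt_Z1 (a : Fin 7 → Fin 3) (j : Fin 7) (v : V) :
    act (fun k => shift (a k)) (applyAt Z1 j v)
      = ω ^ ((-a j : Fin 3) : ℕ) • applyAt Z1 j (act (fun k => shift (a k)) v) := by
  funext s
  simp only [Z1_eq_diagonal, act_shift_apply, applyAt_diagonal_apply, Pi.smul_apply, smul_eq_mul,
    ← mul_assoc, ← omega_pow_val_add, Pi.sub_apply, neg_add_eq_sub]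

open Fin.CommRing in
def cosetState (c a b : Fin 7 → Fin 3) : V := ∑ y : Fin 3, ∑ x : Fin 3, e (c + x • a + y • b)

lemma cosetState_comm (c a b : Fin 7 → Fin 3) : cosetState c a b = cosetState c b a := by
  rw [cosetState, cosetState, Finset.sum_comm]
  simp only [add_right_comm c]

open Fin.CommRing in
lemma act_shift_cosetState (c a b : Fin 7 → Fin 3) :
    act (fun k => shift (a k)) (cosetState c a b) = cosetState c a b := by
  funext s
  have translate (x y : Fin 3) : e (c + x • a + y • b) (s - a) = e (c + (x + 1) • a + y • b) s := by
    simp only [e, sub_eq_iff_eq_add]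
    congr! 1
    constructor <;> (intro h; rw [h]; module)
  simp only [act_shift_apply, cosetState, Finset.sum_apply, translate]
  exact Finset.sum_congr rfl fun y _ => Fintype.sum_equiv (Equiv.addRight 1) _ _ fun _ => rfl

def S1Exponents : Fin 7 → Fin 3 := ![1, 0, 2, 0, 1, 0, 2]

def S2Exponents : Fin 7 → Fin 3 := ![0, 1, 0, 2, 0, 1, 0]

lemma S1_eq_act_shift : S1 = act fun k => shift (S1Exponents k) := by
  rw [S1]
  congr 1
  funext k
  fin_cases k <;> simp [S1Exponents, X1_eq_shift, X2_eq_shift, shift_zero]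

lemma S2_eq_act_shift : S2 = act fun k => shift (S2Exponents k) := by
  rw [S2]
  congr 1
  funext k
  fin_cases k <;> simp [S2Exponents, X1_eq_shift, X2_eq_shift, shift_zero]

lemma cw_eq_cosetState (i : Fin 3) : cw i = cosetState (fun _ => i) S1Exponents S2Exponents := by
  fin_cases i <;>
    simp only [Fin.zero_eta, Fin.mk_one, Fin.reduceFinMk, cw, Matrix.cons_val, c0, c1, c2,
      cosetState, Fin.sum_univ_three, ← add_assoc] <;>
    congr <;> decide

lemma S1_cw (i : Fin 3) : S1 (cw i) = cw i := by
  rw [S1_eq_act_shift, cw_eq_cosetState, act_shift_cosetState]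

lemma S2_cw (i : Fin 3) : S2 (cw i) = cw i := by
  rw [S2_eq_act_shift, cw_eq_cosetState, cosetState_comm, act_shift_cosetState]

lemma S1_applyAt_Z1_cw (i : Fin 3) (j : Fin 7) :
    S1 (applyAt Z1 j (cw i)) = ω ^ ((-S1Exponents j : Fin 3) : ℕ) • applyAt Z1 j (cw i) := by
  rw [S1_eq_act_shift, act_shift_applyAt_Z1, ← S1_eq_act_shift, S1_cw]

lemma S2_applyAt_Z1_cw (i : Fin 3) (j : Fin 7) :
    S2 (applyAt Z1 j (cw i)) = ω ^ ((-S2Exponents j : Fin 3) : ℕ) • applyAt Z1 j (cw i) := by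
  rw [S2_eq_act_shift, act_shift_applyAt_Z1, ← S2_eq_act_shift, S2_cw]

/-- Syndromes of single Z₁ phase errors: on each corrupted codeword Z₁^(j)|ψ⟩,
(i) j ∈ {0,4}: S₁ gives eigenvalue ω², S₂ gives 1; (ii) j ∈ {2,6}: S₁ gives ω, S₂ gives 1;
(iii) j ∈ {1,5}: S₁ gives 1, S₂ gives ω²; (iv) j = 3: S₁ gives 1, S₂ gives ω. -/
theorem Z1_error_syndromes :
    ∀ i : Fin 3, ∀ j : Fin 7,
      ((j = 0 ∨ j = 4) →
        S1 (applyAt Z1 j (cw i)) = ω ^ 2 • applyAt Z1 j (cw i) ∧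
        S2 (applyAt Z1 j (cw i)) = applyAt Z1 j (cw i)) ∧
      ((j = 2 ∨ j = 6) →
        S1 (applyAt Z1 j (cw i)) = ω • applyAt Z1 j (cw i) ∧
        S2 (applyAt Z1 j (cw i)) = applyAt Z1 j (cw i)) ∧
      ((j = 1 ∨ j = 5) →
        S1 (applyAt Z1 j (cw i)) = applyAt Z1 j (cw i) ∧
        S2 (applyAt Z1 j (cw i)) = ω ^ 2 • applyAt Z1 j (cw i)) ∧
      (j = 3 →
        S1 (applyAt Z1 j (cw i)) = applyAt Z1 j (cw i) ∧
        S2 (applyAt Z1 j (cw i)) = ω • applyAt Z1 j (cw i)) := by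
  intro i j
  have hS1 := S1_applyAt_Z1_cw i j
  have hS2 := S2_applyAt_Z1_cw i j
  refine ⟨?_, ?_, ?_, ?_⟩ <;> rintro (rfl | rfl) <;>
    simp_all [S1Exponents, S2Exponents, Fin.neg_def]
end
end
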